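/- The function f(x) = (2x/sin x + x/tan x − 3)/(x³·sin x) is strictly increasing on (0, π/2). -/

import Mathlib

/-!
On `(0, π/2)` the ratio equals `g x = (2x + x cos x - 3 sin x) / (x³ sin² x)`, and
`g' x = sin x · W(x, sin x, cos x) / (x³ sin² x)²` for an explicit polynomial `W`. The leading
terms of `W(x, sin x, cos x)` cancel up to order `x ^ 10`, so positivity of `W` needs the
alternating Taylor bounds `x - ⋯ - x⁷/7! ≤ sin x ≤ x - ⋯ + x⁹/9!` and
`1 - ⋯ - x¹⁰/10! ≤ cos x ≤ 1 - ⋯ + x⁸/8!` for `x ≥ 0`; these follow from `cos x ≤ 1` by repeated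
integration. Substituting them into `W` leaves `x ^ 10` times a sextic in `x ^ 2` that is
positive for `x ≤ 2`.
-/

open Real Finset

noncomputable def sinTaylor (n : ℕ) (x : ℝ) : ℝ :=
  ∑ k ∈ range n, (-1) ^ k * x ^ (2 * k + 1) / (2 * k + 1).factorial

noncomputable def cosTaylor (n : ℕ) (x : ℝ) : ℝ :=
  ∑ k ∈ range n, (-1) ^ k * x ^ (2 * k) / (2 * k).factorial

lemma hasDerivAt_sinTaylor (n : ℕ) (x : ℝ) : HasDerivAt (sinTaylor n) (cosTaylor n x) x := by
  induction n with
  | zero =>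
    have h0 : sinTaylor 0 = fun _ => 0 := by funext; simp [sinTaylor]
    simpa [h0, cosTaylor] using hasDerivAt_const x (0 : ℝ)
  | succ n ih =>
    have hsucc : sinTaylor (n + 1) =
        fun y => sinTaylor n y + (-1) ^ n * y ^ (2 * n + 1) / (2 * n + 1).factorial := by
      funext y; simp [sinTaylor, sum_range_succ]
    have hterm : HasDerivAt (fun y : ℝ => (-1) ^ n * y ^ (2 * n + 1) / (2 * n + 1).factorial)
        ((-1) ^ n * x ^ (2 * n) / (2 * n).factorial) x := by
      refine (((hasDerivAt_pow (2 * n + 1) x).const_mul ((-1 : ℝ) ^ n)).div_const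
        ((2 * n + 1).factorial : ℝ)).congr_deriv ?_
      rw [Nat.factorial_succ]
      push_cast
      field_simp

    rw [hsucc]
    have := ih.fun_add hterm
    rwa [cosTaylor, sum_range_succ]

lemma hasDerivAt_cosTaylor_succ (n : ℕ) (x : ℝ) :
    HasDerivAt (cosTaylor (n + 1)) (-sinTaylor n x) x := by
  induction n with
  | zero =>
    have h1 : cosTaylor 1 = fun _ => 1 := by funext; simp [cosTaylor]
    simpa [h1, sinTaylor] using hasDerivAt_const x (1 : ℝ)
  | succ n ih =>
    have hsucc : cosTaylor (n + 2) = fun y =>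
        cosTaylor (n + 1) y + (-1) ^ (n + 1) * y ^ (2 * n + 2) / (2 * n + 2).factorial := by
      funext y; simp [cosTaylor, sum_range_succ _ (n + 1), mul_add]
    have hterm : HasDerivAt (fun y : ℝ => (-1) ^ (n + 1) * y ^ (2 * n + 2) / (2 * n + 2).factorial)
        (-((-1) ^ n * x ^ (2 * n + 1) / (2 * n + 1).factorial)) x := by
      refine (((hasDerivAt_pow (2 * n + 2) x).const_mul ((-1 : ℝ) ^ (n + 1))).div_const
        ((2 * n + 2).factorial : ℝ)).congr_deriv ?_
      rw [Nat.factorial_succ]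
      push_cast
      field_simp
      ring
    rw [hsucc, sinTaylor, sum_range_succ, neg_add]
    exact ih.fun_add hterm

lemma nonneg_of_hasDerivAt_nonneg {f f' : ℝ → ℝ} (hf : ∀ t, HasDerivAt f (f' t) t)
    (hf' : ∀ t, 0 ≤ t → 0 ≤ f' t) (h0 : f 0 = 0) {x : ℝ} (hx : 0 ≤ x) : 0 ≤ f x := by
  have hmono : MonotoneOn f (Set.Ici 0) :=
    monotoneOn_of_hasDerivWithinAt_nonneg (convex_Ici 0)
      (fun t _ => (hf t).continuousAt.continuousWithinAt)
      (fun t _ => (hf t).hasDerivWithinAt)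
      (fun t ht => hf' t (interior_subset ht))
  simpa [h0] using hmono Set.self_mem_Ici hx hx

lemma sinTaylor_sub_sin_alternating_of_cos {n : ℕ}
    (hcos : ∀ t, 0 ≤ t → 0 ≤ (-1) ^ n * (cosTaylor (n + 1) t - cos t)) {x : ℝ} (hx : 0 ≤ x) :
    0 ≤ (-1) ^ n * (sinTaylor (n + 1) x - sin x) :=
  nonneg_of_hasDerivAt_nonneg
    (fun t => ((hasDerivAt_sinTaylor (n + 1) t).sub (hasDerivAt_sin t)).const_mul _) hcos
    (by simp [sinTaylor]) hx

lemma cosTaylor_sub_cos_alternating_of_sin {n : ℕ}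
    (hsin : ∀ t, 0 ≤ t → 0 ≤ (-1) ^ n * (sinTaylor (n + 1) t - sin t)) {x : ℝ} (hx : 0 ≤ x) :
    0 ≤ (-1) ^ (n + 1) * (cosTaylor (n + 2) x - cos x) :=
  nonneg_of_hasDerivAt_nonneg
    (fun t => ((hasDerivAt_cosTaylor_succ (n + 1) t).sub (hasDerivAt_cos t)).const_mul _)
    (fun t ht => by convert hsin t ht using 1; ring)
    (by simp [cosTaylor, sum_range_succ']) hx

theorem cosTaylor_sub_cos_alternating (n : ℕ) {x : ℝ} (hx : 0 ≤ x) :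
    0 ≤ (-1) ^ n * (cosTaylor (n + 1) x - cos x) := by
  induction n generalizing x with
  | zero => simpa [cosTaylor] using cos_le_one x
  | succ n ih =>
    exact cosTaylor_sub_cos_alternating_of_sin
      (fun _ ht => sinTaylor_sub_sin_alternating_of_cos (fun _ => ih) ht) hx

theorem sinTaylor_sub_sin_alternating (n : ℕ) {x : ℝ} (hx : 0 ≤ x) :
    0 ≤ (-1) ^ n * (sinTaylor (n + 1) x - sin x) :=
  sinTaylor_sub_sin_alternating_of_cos (fun _ => cosTaylor_sub_cos_alternating n) hx

lemma sin_mem_Icc_taylor_seven_nine {x : ℝ} (hx : 0 ≤ x) :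
    sin x ∈ Set.Icc (x - x ^ 3 / 6 + x ^ 5 / 120 - x ^ 7 / 5040)
      (x - x ^ 3 / 6 + x ^ 5 / 120 - x ^ 7 / 5040 + x ^ 9 / 362880) := by
  have hlo := sinTaylor_sub_sin_alternating 3 hx
  have hhi := sinTaylor_sub_sin_alternating 4 hx
  have h4 : sinTaylor 4 x = x - x ^ 3 / 6 + x ^ 5 / 120 - x ^ 7 / 5040 := by
    norm_num [sinTaylor, sum_range_succ, Nat.factorial]; ring
  have h5 : sinTaylor 5 x = x - x ^ 3 / 6 + x ^ 5 / 120 - x ^ 7 / 5040 + x ^ 9 / 362880 := by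
    norm_num [sinTaylor, sum_range_succ, Nat.factorial]; ring
  rw [h4] at hlo
  rw [h5] at hhi
  constructor <;> linarith

lemma cos_mem_Icc_taylor_ten_eight {x : ℝ} (hx : 0 ≤ x) :
    cos x ∈ Set.Icc (1 - x ^ 2 / 2 + x ^ 4 / 24 - x ^ 6 / 720 + x ^ 8 / 40320 - x ^ 10 / 3628800)
      (1 - x ^ 2 / 2 + x ^ 4 / 24 - x ^ 6 / 720 + x ^ 8 / 40320) := by
  have hlo := cosTaylor_sub_cos_alternating 5 hx
  have hhi := cosTaylor_sub_cos_alternating 4 hx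
  have h6 : cosTaylor 6 x =
      1 - x ^ 2 / 2 + x ^ 4 / 24 - x ^ 6 / 720 + x ^ 8 / 40320 - x ^ 10 / 3628800 := by
    norm_num [cosTaylor, sum_range_succ, Nat.factorial]; ring
  have h5 : cosTaylor 5 x = 1 - x ^ 2 / 2 + x ^ 4 / 24 - x ^ 6 / 720 + x ^ 8 / 40320 := by
    norm_num [cosTaylor, sum_range_succ, Nat.factorial]; ring
  rw [h6] at hlo
  rw [h5] at hhi
  constructor <;> linarith

def huygensPoly (x s c : ℝ) : ℝ :=
  9 * x ^ 2 * s ^ 2 - 4 * x ^ 3 * s + x ^ 3 * s * c - x ^ 4 * s ^ 2 - 4 * x ^ 4 * c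
    - 2 * x ^ 4 * c ^ 2

lemma le_huygensPoly {x s c sl su cl cu : ℝ} (hx : 0 ≤ x) (hsl : 0 ≤ sl) (hs : s ∈ Set.Icc sl su)
    (hc₀ : 0 ≤ c) (hc : c ∈ Set.Icc cl cu) :
    9 * x ^ 2 * sl ^ 2 - 4 * x ^ 3 * su + x ^ 3 * sl * cl - x ^ 4 * su ^ 2 - 4 * x ^ 4 * cu
      - 2 * x ^ 4 * cu ^ 2 ≤ huygensPoly x s c := by
  obtain ⟨hsl_le, hle_su⟩ := hs
  obtain ⟨hcl_le, hle_cu⟩ := hc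
  have hsc : sl * cl ≤ s * c :=
    (mul_le_mul_of_nonneg_left hcl_le hsl).trans (mul_le_mul_of_nonneg_right hsl_le hc₀)
  unfold huygensPoly
  rw [mul_assoc _ s, mul_assoc _ sl]
  gcongr
  linarith

/-- `x ^ 10` times this sextic in `t = x ^ 2` is the lower bound that `le_huygensPoly` gives when
fed the Taylor bounds for `sin x` and `cos x`. -/
lemma huygens_sextic_pos {t : ℝ} (ht₀ : 0 ≤ t) (ht : t ≤ 4) :
    0 < 1 / 105 - 353 / 259200 * t + 13 / 151200 * t ^ 2 - 293 / 101606400 * t ^ 3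
      + 23 / 508032000 * t ^ 4 - t ^ 5 / 12192768000 - t ^ 6 / 131681894400 := by
  nlinarith [pow_nonneg ht₀ 2, pow_nonneg ht₀ 4, pow_le_pow_left₀ ht₀ ht 3,
    pow_le_pow_left₀ ht₀ ht 5, pow_le_pow_left₀ ht₀ ht 6]

lemma huygensPoly_sin_cos_pos {x : ℝ} (hx₀ : 0 < x) (hx : x ≤ 2) (hc : 0 ≤ cos x) :
    0 < huygensPoly x (sin x) (cos x) := by
  have hsl : 0 ≤ x - x ^ 3 / 6 + x ^ 5 / 120 - x ^ 7 / 5040 := by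
    have hx2 : x ^ 2 ≤ 4 := by nlinarith
    have h1 := mul_nonneg hx₀.le (show 0 ≤ 1 - x ^ 2 / 6 by linarith)
    have h2 := mul_nonneg (pow_nonneg hx₀.le 5) (show 0 ≤ 1 - x ^ 2 / 42 by linarith)
    linarith
  refine lt_of_lt_of_le ?_ (le_huygensPoly hx₀.le hsl (sin_mem_Icc_taylor_seven_nine hx₀.le) hc
    (cos_mem_Icc_taylor_ten_eight hx₀.le))
  calc (0 : ℝ) < x ^ 10 * (1 / 105 - 353 / 259200 * x ^ 2 + 13 / 151200 * (x ^ 2) ^ 2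
        - 293 / 101606400 * (x ^ 2) ^ 3 + 23 / 508032000 * (x ^ 2) ^ 4 - (x ^ 2) ^ 5 / 12192768000
        - (x ^ 2) ^ 6 / 131681894400) :=
      mul_pos (pow_pos hx₀ 10) (huygens_sextic_pos (sq_nonneg x) (by nlinarith))
    _ = _ := by ring

lemma hasDerivAt_huygens {x : ℝ} (hx : x ^ 3 * sin x ^ 2 ≠ 0) :
    HasDerivAt (fun y => (2 * y + y * cos y - 3 * sin y) / (y ^ 3 * sin y ^ 2))
      (sin x * huygensPoly x (sin x) (cos x) / (x ^ 3 * sin x ^ 2) ^ 2) x := by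
  have hnum := (((hasDerivAt_id' x).const_mul 2).fun_add ((hasDerivAt_id' x).fun_mul
    (hasDerivAt_cos x))).fun_sub ((hasDerivAt_sin x).const_mul 3)
  have hden := (hasDerivAt_pow 3 x).fun_mul ((hasDerivAt_sin x).fun_pow 2)
  refine (hnum.div hden hx).congr_deriv ?_
  unfold huygensPoly
  ring

lemma huygens_ratio_eqOn :
    Set.EqOn (fun x : ℝ => (2 * x / sin x + x / tan x - 3) / (x ^ 3 * sin x))
      (fun x => (2 * x + x * cos x - 3 * sin x) / (x ^ 3 * sin x ^ 2)) {x | sin x ≠ 0} := by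
  intro x (hx : sin x ≠ 0)
  simp only [tan_eq_sin_div_cos, div_div_eq_mul_div]
  field_simp

lemma sin_pos_of_mem_Ioo_zero_pi_div_two {x : ℝ} (hx : x ∈ Set.Ioo 0 (π / 2)) : 0 < sin x :=
  sin_pos_of_mem_Ioo (Set.Ioo_subset_Ioo_right (half_le_self pi_pos.le) hx)

lemma huygens_ratio'_strictMonoOn :
    StrictMonoOn (fun x => (2 * x + x * cos x - 3 * sin x) / (x ^ 3 * sin x ^ 2))
      (Set.Ioo 0 (π / 2)) := by
  have hden : ∀ x ∈ Set.Ioo 0 (π / 2), 0 < x ^ 3 * sin x ^ 2 := fun x hx =>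
    mul_pos (pow_pos hx.1 3) (pow_pos (sin_pos_of_mem_Ioo_zero_pi_div_two hx) 2)
  refine strictMonoOn_of_hasDerivWithinAt_pos (convex_Ioo 0 (π / 2))
    (fun x hx => (hasDerivAt_huygens (hden x hx).ne').continuousAt.continuousWithinAt)
    (fun x hx => (hasDerivAt_huygens (hden x (interior_subset hx)).ne').hasDerivWithinAt) ?_
  rw [interior_Ioo]
  intro x hx
  have hcos : 0 ≤ cos x := cos_nonneg_of_mem_Icc ⟨by linarith [hx.1, pi_pos], hx.2.le⟩
  have hx2 : x ≤ 2 := by linarith [hx.2, pi_lt_four]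
  exact div_pos (mul_pos (sin_pos_of_mem_Ioo_zero_pi_div_two hx)
    (huygensPoly_sin_cos_pos hx.1 hx2 hcos)) (pow_pos (hden x hx) 2)

theorem huygens_ratio_strictMono :
    StrictMonoOn
      (fun x : ℝ => (2 * x / Real.sin x + x / Real.tan x - 3) / (x ^ 3 * Real.sin x))
      (Set.Ioo 0 (π / 2)) :=
  huygens_ratio'_strictMonoOn.congr (huygens_ratio_eqOn.mono fun _ hx =>
    (sin_pos_of_mem_Ioo_zero_pi_div_two hx).ne').symm
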